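/- Applying the modified jeu de taquin ordering procedure to any shifted tabloid T of shape λ (performing jeu de taquin with the entries of the cells in the rowwise order, from the rightmost cell of the bottom row up to cell (1,1)) produces a shifted standard tableau of shape λ. -/

import Mathlib

/-!
Cells are processed in rowwise order, so just before the slide from `c` the processed cells are
those in lower rows and those right of `c` in its row; inductively they are filled increasingly.
Together with `c` they form an up-closed region (for the product order on `ℕ × ℕ`) in which `c`
is minimal. During the slide the region stays increasing away from the position `e` of the
sliding entry, and each upper or left neighbour of `e` holds an entry smaller than the sliding
entry and than the lower and right neighbours of `e`. A swap moves the smaller of those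
neighbours into `e`, which preserves this; when the entry stops it is smaller than its lower and
right neighbours, so the whole region is increasing.
-/

/-- The cells of the shifted Ferrers diagram of the strict partition
`lam` with `r` rows: pairs `(i,j)` with `1 ≤ i ≤ r` and `i ≤ j ≤ lam i + i - 1`. -/
def shCells (lam : ℕ → ℕ) (r : ℕ) : Finset (ℕ × ℕ) :=
  ((Finset.Icc 1 r) ×ˢ (Finset.Icc 1 ((Finset.Icc 1 r).sup (fun i => lam i + i)))).filter
    (fun p => p.1 ≤ p.2 ∧ p.2 + 1 ≤ lam p.1 + p.1)

/-- The shifted hook of a cell `c = (i,j)`: the cell itself, the cells to its right in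
row `i`, the cells below it in column `j`, and, if the diagonal cell `(j,j)` belongs to
this set, additionally all cells of row `j+1`. -/
def shHook (lam : ℕ → ℕ) (r : ℕ) (c : ℕ × ℕ) : Finset (ℕ × ℕ) :=
  (shCells lam r).filter (fun p =>
    p = c ∨ (p.1 = c.1 ∧ c.2 < p.2) ∨ (p.2 = c.2 ∧ c.1 < p.1) ∨
      (c.1 ≤ c.2 ∧ (c.2, c.2) ∈ shCells lam r ∧ p.1 = c.2 + 1))

/-- The shifted hook length of a cell. -/
def shHookLen (lam : ℕ → ℕ) (r : ℕ) (c : ℕ × ℕ) : ℕ := (shHook lam r c).card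

/-- `lam` is a strict partition of `n` with `r` (positive, strictly decreasing) parts. -/
def IsStrictPartition (lam : ℕ → ℕ) (r n : ℕ) : Prop :=
  0 < r ∧ (∀ i, 1 ≤ i → i ≤ r → 0 < lam i) ∧
    (∀ i j, 1 ≤ i → i < j → j ≤ r → lam j < lam i) ∧
    (∑ i ∈ Finset.Icc 1 r, lam i) = n

/-- A shifted tabloid: a bijective filling of the shifted Ferrers diagram with `1,…,n`. -/
def IsShTabloid (lam : ℕ → ℕ) (r n : ℕ) (T : ℕ × ℕ → ℕ) : Prop :=
  Set.BijOn T (↑(shCells lam r)) (↑(Finset.Icc 1 n))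

/-- Entries increase along rows and columns. -/
def IsIncreasing (lam : ℕ → ℕ) (r : ℕ) (T : ℕ × ℕ → ℕ) : Prop :=
  ∀ p ∈ shCells lam r, ∀ q ∈ shCells lam r,
    ((q.1 = p.1 ∧ q.2 = p.2 + 1) ∨ (q.1 = p.1 + 1 ∧ q.2 = p.2)) → T p < T q

/-- The rowwise order on cells: `a` precedes `b` iff `a` is in a lower row, or in the
same row strictly to the right. -/
def rowLT (a b : ℕ × ℕ) : Prop := b.1 < a.1 ∨ (a.1 = b.1 ∧ b.2 < a.2)

/-- `IsJdtResult lam r D T c₀ U` holds if `U` can be obtained from `T` by performing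
jeu de taquin with the entry in cell `c₀`, with respect to the set of cells `D`:
there is a finite run of swap steps, each moving the entry one cell to the right or
downwards (always exchanging it with the smaller of its right and lower neighbours,
missing cells counting as `+∞`), stopping as soon as the entry is stable or lies in
a cell of `D`. -/
def IsJdtResult (lam : ℕ → ℕ) (r : ℕ) (D : Finset (ℕ × ℕ)) (T : ℕ × ℕ → ℕ)
    (c₀ : ℕ × ℕ) (U : ℕ × ℕ → ℕ) : Prop :=
  ∃ (m : ℕ) (path : ℕ → ℕ × ℕ) (tab : ℕ → ℕ × ℕ → ℕ),
    path 0 = c₀ ∧ tab 0 = T ∧ tab m = U ∧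
    (∀ k, k < m →
      path k ∉ D ∧
      (path (k + 1) = ((path k).1 + 1, (path k).2) ∨
        path (k + 1) = ((path k).1, (path k).2 + 1)) ∧
      path (k + 1) ∈ shCells lam r ∧
      tab k (path (k + 1)) < tab k (path k) ∧
      (∀ σ ∈ shCells lam r,
        (σ = ((path k).1 + 1, (path k).2) ∨ σ = ((path k).1, (path k).2 + 1)) →
          tab k (path (k + 1)) ≤ tab k σ) ∧
      tab (k + 1) = fun c =>
        if c = path k then tab k (path (k + 1))
        else if c = path (k + 1) then tab k (path k) else tab k c) ∧
    (path m ∈ D ∨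
      ∀ σ ∈ shCells lam r,
        (σ = ((path m).1 + 1, (path m).2) ∨ σ = ((path m).1, (path m).2 + 1)) →
          tab m (path m) ≤ tab m σ)

theorem Function.ite_eq_comp_swap {α β : Type*} [DecidableEq α] (f : α → β) (a b : α) :
    (fun x => if x = a then f b else if x = b then f a else f x) = f ∘ Equiv.swap a b := by
  funext x
  simp only [Function.comp_apply, Equiv.swap_apply_def, apply_ite f]

theorem List.Pairwise.mem_take_iff {α : Type*} {R : α → α → Prop} {L : List α}
    (hR : ∀ a b, R a b → ¬ R b a) (hL : L.Pairwise R) {k : ℕ} (hk : k < L.length)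
    {d : α} (hd : d ∈ L) : d ∈ L.take k ↔ R d L[k] := by
  have hlt : ∀ i j (hi : i < L.length) (hj : j < L.length), i < j → R L[i] L[j] :=
    List.pairwise_iff_getElem.1 hL
  obtain ⟨i, hi, rfl⟩ := List.mem_iff_getElem.1 hd
  rw [List.mem_take_iff_getElem]
  constructor
  · rintro ⟨j, hj, hji⟩
    exact hji ▸ hlt j k _ hk (by omega)
  · intro hik
    rcases lt_trichotomy i k with h | rfl | h
    · exact ⟨i, by omega, rfl⟩
    · exact absurd hik (fun h => hR _ _ h h)
    · exact absurd (hlt k i hk hi h) (hR _ _ hik)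

theorem List.Pairwise.mem_take_add_one_iff {α : Type*} {R : α → α → Prop} {L : List α}
    (hR : ∀ a b, R a b → ¬ R b a) (hL : L.Pairwise R) {k : ℕ} (hk : k < L.length)
    {d : α} (hd : d ∈ L) : d ∈ L.take (k + 1) ↔ d = L[k] ∨ R d L[k] := by
  rw [List.take_add_one, List.getElem?_eq_getElem hk, Option.toList_some, List.mem_append,
    List.mem_singleton, hL.mem_take_iff hR hk hd, or_comm]

theorem Prod.nat_covBy_iff {p q : ℕ × ℕ} :
    p ⋖ q ↔ q = (p.1 + 1, p.2) ∨ q = (p.1, p.2 + 1) := by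
  rw [Prod.covBy_iff, Nat.covBy_iff_add_one_eq, Nat.covBy_iff_add_one_eq, Prod.ext_iff,
    Prod.ext_iff]
  omega

theorem rowLT_asymm {a b : ℕ × ℕ} (hab : rowLT a b) : ¬ rowLT b a := by
  unfold rowLT at *
  omega

theorem isUpperSet_insert_setOf_rowLT (c : ℕ × ℕ) : IsUpperSet (insert c {d | rowLT d c}) := by
  intro a b hab ha
  simp only [Set.mem_insert_iff, Set.mem_ofPred_eq, rowLT, Prod.ext_iff] at ha ⊢
  have := Prod.le_def.1 hab
  omega

theorem minimal_insert_setOf_rowLT (c : ℕ × ℕ) : Minimal (· ∈ insert c {d | rowLT d c}) c := by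
  refine ⟨Set.mem_insert c _, fun y hy hyc => ?_⟩
  simp only [Set.mem_insert_iff, Set.mem_ofPred_eq, rowLT] at hy
  rw [Prod.le_def] at hyc ⊢
  rcases hy with rfl | hy
  · exact ⟨le_rfl, le_rfl⟩
  · omega

/-- In the product order on `ℕ × ℕ`, the covers `p ⋖ q` are the steps one cell down or right. -/
def IsIncreasingOn (A : Set (ℕ × ℕ)) (T : ℕ × ℕ → ℕ) : Prop :=
  ∀ p ∈ A, ∀ q ∈ A, p ⋖ q → T p < T q

theorem IsIncreasingOn.mono {A B : Set (ℕ × ℕ)} {T : ℕ × ℕ → ℕ} (h : IsIncreasingOn A T)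
    (hBA : B ⊆ A) : IsIncreasingOn B T :=
  fun p hp q hq => h p (hBA hp) q (hBA hq)

theorem isIncreasing_iff_isIncreasingOn (lam : ℕ → ℕ) (r : ℕ) (T : ℕ × ℕ → ℕ) :
    IsIncreasing lam r T ↔ IsIncreasingOn (shCells lam r) T := by
  have hcov : ∀ p q : ℕ × ℕ,
      ((q.1 = p.1 ∧ q.2 = p.2 + 1) ∨ (q.1 = p.1 + 1 ∧ q.2 = p.2)) ↔ p ⋖ q := by
    intro p q
    rw [Prod.nat_covBy_iff, Prod.ext_iff, Prod.ext_iff]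
    tauto
  simp only [IsIncreasing, IsIncreasingOn, Finset.mem_coe, hcov]

section JeuDeTaquin

variable {lam : ℕ → ℕ} {r : ℕ}

theorem IsJdtResult.induction_on {D : Finset (ℕ × ℕ)} {T U : ℕ × ℕ → ℕ} {c : ℕ × ℕ}
    (P : (ℕ × ℕ → ℕ) → ℕ × ℕ → Prop) (h : IsJdtResult lam r D T c U) (hstart : P T c)
    (hslide : ∀ V e e', e' ∈ shCells lam r → e ⋖ e' → V e' < V e →
      (∀ σ ∈ shCells lam r, e ⋖ σ → V e' ≤ V σ) → P V e → P (V ∘ Equiv.swap e e') e') :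
    ∃ e, P U e ∧ (e ∈ D ∨ ∀ σ ∈ shCells lam r, e ⋖ σ → U e ≤ U σ) := by
  obtain ⟨m, path, tab, hpath, htab, rfl, hsteps, hstop⟩ := h
  have hP : ∀ k ≤ m, P (tab k) (path k) := by
    intro k hk
    induction k with
    | zero => rwa [hpath, htab]
    | succ k ih =>
      obtain ⟨-, hmove, hcell, hlt, hmin, hupd⟩ := hsteps k hk
      rw [hupd, Function.ite_eq_comp_swap]
      exact hslide _ _ _ hcell (Prod.nat_covBy_iff.2 hmove) hlt
        (fun σ hσ hcov => hmin σ hσ (Prod.nat_covBy_iff.1 hcov)) (ih (by omega))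
  exact ⟨path m, hP m le_rfl,
    hstop.imp_right fun h σ hσ hcov => h σ hσ (Prod.nat_covBy_iff.1 hcov)⟩

theorem IsJdtResult.isShTabloid {n : ℕ} {D : Finset (ℕ × ℕ)} {T U : ℕ × ℕ → ℕ} {c : ℕ × ℕ}
    (h : IsJdtResult lam r D T c U) (hT : IsShTabloid lam r n T) (hc : c ∈ shCells lam r) :
    IsShTabloid lam r n U := by
  obtain ⟨e, ⟨hU, -⟩, -⟩ :=
    h.induction_on (fun V e => IsShTabloid lam r n V ∧ e ∈ shCells lam r) ⟨hT, hc⟩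
      fun V e e' he' _ _ _ ⟨hV, he⟩ => ⟨hV.comp (Equiv.bijOn_swap he he'), he'⟩
  exact hU

/-- The sliding entry sits at `e`; the cells `x ⋖ e` are its upper and left neighbours. -/
structure IsSlideInvariant (lam : ℕ → ℕ) (r : ℕ) (S : Set (ℕ × ℕ)) (V : ℕ × ℕ → ℕ)
    (e : ℕ × ℕ) : Prop where
  mem : e ∈ (shCells lam r : Set (ℕ × ℕ)) ∩ S
  injOn : Set.InjOn V (shCells lam r)
  increasingOn : IsIncreasingOn (((shCells lam r : Set (ℕ × ℕ)) ∩ S) \ {e}) V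
  pred_lt_succ : ∀ x ∈ (shCells lam r : Set (ℕ × ℕ)) ∩ S, x ⋖ e →
    ∀ q ∈ shCells lam r, e ⋖ q → V x < V q
  pred_lt : ∀ x ∈ (shCells lam r : Set (ℕ × ℕ)) ∩ S, x ⋖ e → V x < V e

theorem isSlideInvariant_start {S : Set (ℕ × ℕ)} {T : ℕ × ℕ → ℕ} {c : ℕ × ℕ}
    (hc : Minimal (· ∈ S) c) (hcell : c ∈ shCells lam r) (hT : Set.InjOn T (shCells lam r))
    (hinc : IsIncreasingOn (((shCells lam r : Set (ℕ × ℕ)) ∩ S) \ {c}) T) :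
    IsSlideInvariant lam r S T c :=
  { mem := ⟨hcell, hc.prop⟩
    injOn := hT
    increasingOn := hinc
    pred_lt_succ := fun _ hx hxc => absurd hxc.lt (hc.not_lt hx.2)
    pred_lt := fun _ hx hxc => absurd hxc.lt (hc.not_lt hx.2) }

theorem IsSlideInvariant.slide {S : Set (ℕ × ℕ)} {V : ℕ × ℕ → ℕ} {e e' : ℕ × ℕ}
    (hS : IsUpperSet S) (h : IsSlideInvariant lam r S V e) (he' : e' ∈ shCells lam r)
    (hee' : e ⋖ e') (hlt : V e' < V e) (hmin : ∀ σ ∈ shCells lam r, e ⋖ σ → V e' ≤ V σ) :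
    IsSlideInvariant lam r S (V ∘ Equiv.swap e e') e' := by
  set W := V ∘ Equiv.swap e e'
  have hWe : W e = V e' := by simp [W]
  have hWe' : W e' = V e := by simp [W]
  have hW : ∀ x, x ≠ e → x ≠ e' → W x = V x := fun x h₁ h₂ => by
    simp [W, Equiv.swap_apply_of_ne_of_ne h₁ h₂]
  have hswap := Equiv.bijOn_swap (h.mem.1 : e ∈ (shCells lam r : Set (ℕ × ℕ))) he'
  have he'S : e' ∈ (shCells lam r : Set (ℕ × ℕ)) ∩ S := ⟨he', hS hee'.le h.mem.2⟩
  have hpred : ∀ x ∈ (shCells lam r : Set (ℕ × ℕ)) ∩ S, x ⋖ e' → W x ≤ V e' := by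
    intro x hx hxe'
    by_cases hxe : x = e
    · rw [hxe, hWe]
    · rw [hW x hxe hxe'.ne]
      exact (h.increasingOn x ⟨hx, hxe⟩ e' ⟨he'S, hee'.ne'⟩ hxe').le
  refine ⟨he'S, h.injOn.comp hswap.injOn hswap.mapsTo, ?_, ?_, ?_⟩
  · rintro p ⟨hp, hpe'⟩ q ⟨hq, hqe'⟩ hpq
    by_cases hpe : p = e
    · subst hpe
      rw [hWe, hW q hpq.ne' hqe']
      exact (hmin q hq.1 hpq).lt_of_ne fun hVq => hqe' (h.injOn hq.1 he' hVq.symm)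
    by_cases hqe : q = e
    · subst hqe
      rw [hWe, hW p hpe hpe']
      exact h.pred_lt_succ p hp hpq e' he' hee'
    rw [hW p hpe hpe', hW q hqe hqe']
    exact h.increasingOn p ⟨hp, hpe⟩ q ⟨hq, hqe⟩ hpq
  · intro x hx hxe' q hq he'q
    have hqe : q ≠ e := (hee'.lt.trans he'q.lt).ne'
    have hqS : q ∈ (shCells lam r : Set (ℕ × ℕ)) ∩ S := ⟨hq, hS he'q.le he'S.2⟩
    rw [hW q hqe he'q.ne']
    exact (hpred x hx hxe').trans_lt
      (h.increasingOn e' ⟨he'S, hee'.ne'⟩ q ⟨hqS, hqe⟩ he'q)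
  · intro x hx hxe'
    exact hWe' ▸ (hpred x hx hxe').trans_lt hlt

theorem IsSlideInvariant.isIncreasingOn {S : Set (ℕ × ℕ)} {V : ℕ × ℕ → ℕ} {e : ℕ × ℕ}
    (h : IsSlideInvariant lam r S V e) (hstable : ∀ σ ∈ shCells lam r, e ⋖ σ → V e ≤ V σ) :
    IsIncreasingOn ((shCells lam r : Set (ℕ × ℕ)) ∩ S) V := by
  intro p hp q hq hpq
  by_cases hpe : p = e
  · subst hpe
    exact (hstable q hq.1 hpq).lt_of_ne fun hVq => hpq.ne (h.injOn hp.1 hq.1 hVq)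
  by_cases hqe : q = e
  · exact hqe ▸ h.pred_lt p hp (hqe ▸ hpq)
  exact h.increasingOn p ⟨hp, hpe⟩ q ⟨hq, hqe⟩ hpq

theorem IsJdtResult.isIncreasingOn {S : Set (ℕ × ℕ)} {T U : ℕ × ℕ → ℕ} {c : ℕ × ℕ}
    (h : IsJdtResult lam r ∅ T c U) (hS : IsUpperSet S) (hc : Minimal (· ∈ S) c)
    (hcell : c ∈ shCells lam r) (hT : Set.InjOn T (shCells lam r))
    (hinc : IsIncreasingOn (((shCells lam r : Set (ℕ × ℕ)) ∩ S) \ {c}) T) :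
    IsIncreasingOn ((shCells lam r : Set (ℕ × ℕ)) ∩ S) U := by
  obtain ⟨e, he, hstop⟩ := h.induction_on (IsSlideInvariant lam r S)
    (isSlideInvariant_start hc hcell hT hinc)
    fun V e e' he' hee' hlt hmin hV => hV.slide hS he' hee' hlt hmin
  exact he.isIncreasingOn (hstop.resolve_left (Finset.notMem_empty e))

theorem IsJdtResult.isIncreasingOn_take_add_one {L : List (ℕ × ℕ)}
    (hmem : ∀ c : ℕ × ℕ, c ∈ L ↔ c ∈ shCells lam r) (hsort : L.Pairwise rowLT) {k : ℕ}
    (hk : k < L.length) {T U : ℕ × ℕ → ℕ} (h : IsJdtResult lam r ∅ T L[k] U)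
    (hT : Set.InjOn T (shCells lam r)) (hinc : IsIncreasingOn {d | d ∈ L.take k} T) :
    IsIncreasingOn {d | d ∈ L.take (k + 1)} U := by
  have hasymm : ∀ a b, rowLT a b → ¬ rowLT b a := fun _ _ => rowLT_asymm
  refine (h.isIncreasingOn (isUpperSet_insert_setOf_rowLT _) (minimal_insert_setOf_rowLT _)
    ((hmem _).1 (List.getElem_mem hk)) hT (hinc.mono ?_)).mono ?_
  · rintro d ⟨⟨hd, hdS⟩, hdc⟩
    exact (hsort.mem_take_iff hasymm hk ((hmem d).2 hd)).2 (hdS.resolve_left hdc)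
  · intro d hd
    have hdL := List.mem_of_mem_take hd
    exact ⟨(hmem d).1 hdL, (hsort.mem_take_add_one_iff hasymm hk hdL).1 hd⟩

end JeuDeTaquin

theorem ordering_procedure_standard_general (n r : ℕ) (lam : ℕ → ℕ)
    (T : ℕ × ℕ → ℕ) (hT : IsShTabloid lam r n T)
    (L : List (ℕ × ℕ))
    (hmem : ∀ c : ℕ × ℕ, c ∈ L ↔ c ∈ shCells lam r)
    (hsort : L.Pairwise rowLT)
    (tab : ℕ → ℕ × ℕ → ℕ) (h0 : tab 0 = T)
    (hstep : ∀ k, k < L.length →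
      IsJdtResult lam r ∅ (tab k) (L.getD k (0, 0)) (tab (k + 1))) :
    IsShTabloid lam r n (tab L.length) ∧ IsIncreasing lam r (tab L.length) := by
  have hprocessed : ∀ k ≤ L.length,
      IsShTabloid lam r n (tab k) ∧ IsIncreasingOn {d | d ∈ L.take k} (tab k) := by
    intro k hk
    induction k with
    | zero => exact ⟨h0 ▸ hT, by simp [IsIncreasingOn]⟩
    | succ k ih =>
      obtain ⟨hTk, hinc⟩ := ih (by omega)
      have hk' : k < L.length := by omega
      have hjdt : IsJdtResult lam r ∅ (tab k) L[k] (tab (k + 1)) :=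
        List.getD_eq_getElem L (0, 0) hk' ▸ hstep k hk'
      exact ⟨hjdt.isShTabloid hTk ((hmem _).1 (List.getElem_mem hk')),
        hjdt.isIncreasingOn_take_add_one hmem hsort hk' hTk.injOn hinc⟩
  obtain ⟨hTab, hinc⟩ := hprocessed L.length le_rfl
  refine ⟨hTab, (isIncreasing_iff_isIncreasingOn _ _ _).2 (hinc.mono fun d hd => ?_)⟩
  simpa [hmem] using hd

/-- applying jeu de taquin to the entries of the cells in the rowwise
order (from the rightmost cell of the bottom row up to `(1,1)`) turns any shifted
tabloid into a shifted standard tableau. -/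
theorem ordering_procedure_standard (n r : ℕ) (lam : ℕ → ℕ)
    (hlam : IsStrictPartition lam r n)
    (T : ℕ × ℕ → ℕ) (hT : IsShTabloid lam r n T)
    (L : List (ℕ × ℕ)) (hnd : L.Nodup)
    (hmem : ∀ c : ℕ × ℕ, c ∈ L ↔ c ∈ shCells lam r)
    (hsort : L.Pairwise rowLT)
    (tab : ℕ → ℕ × ℕ → ℕ) (h0 : tab 0 = T)
    (hstep : ∀ k, k < L.length →
      IsJdtResult lam r ∅ (tab k) (L.getD k (0, 0)) (tab (k + 1))) :
    IsShTabloid lam r n (tab L.length) ∧ IsIncreasing lam r (tab L.length) :=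
  ordering_procedure_standard_general n r lam T hT L hmem hsort tab h0 hstep
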